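/- Mellin–Barnes beta integral: for complex z and γ with 0 < γ < Re(z), and for real t > 0, one has (1/(2πi)) ∫_{(γ)} Γ(u)Γ(z-u)/Γ(z) · t^{-u} du = (1+t)^{-z}, where the integral is over the vertical line Re(u) = γ. -/

import Mathlib

open Complex MeasureTheory Set

lemma aux_abs_Gamma_le {s : ℂ} (hs : 0 < s.re) :
    ‖Complex.Gamma s‖ ≤ Real.Gamma s.re := by
  rw [Complex.Gamma_eq_integral hs, Real.Gamma_eq_integral hs, Complex.GammaIntegral]
  refine le_trans (norm_integral_le_integral_norm _) (le_of_eq ?_)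
  refine setIntegral_congr_fun measurableSet_Ioi fun x hx => ?_
  rw [norm_mul, Complex.norm_real, Real.norm_eq_abs,
    Complex.norm_cpow_eq_rpow_re_of_pos hx, Complex.sub_re, Complex.one_re,
    abs_of_pos (Real.exp_pos _)]

lemma aux_gamma_bound {γ : ℝ} (hγ : 0 < γ) (τ : ℝ) :
    ‖Complex.Gamma ((γ:ℂ) + τ * I)‖ ≤ Real.Gamma (γ + 2) / (γ ^ 2 + τ ^ 2) := by
  have hre : ((γ:ℂ) + τ * I).re = γ := by simp
  have him : ((γ:ℂ) + τ * I).im = τ := by simp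
  have hs0 : (γ:ℂ) + τ * I ≠ 0 := by
    intro h; have h' := congrArg Complex.re h; rw [hre] at h'; simp at h'; linarith
  have hs1 : (γ:ℂ) + τ * I + 1 ≠ 0 := by
    intro h; have h' := congrArg Complex.re h
    simp only [Complex.add_re, hre, Complex.one_re, Complex.zero_re] at h'; linarith
  have hrec : Complex.Gamma ((γ:ℂ) + τ * I + 1 + 1) =
      ((γ:ℂ) + τ * I + 1) * (((γ:ℂ) + τ * I) * Complex.Gamma ((γ:ℂ) + τ * I)) := by
    rw [Complex.Gamma_add_one _ hs1, Complex.Gamma_add_one _ hs0]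
  have habs : ‖Complex.Gamma ((γ:ℂ) + τ * I)‖ =
      ‖Complex.Gamma ((γ:ℂ) + τ * I + 1 + 1)‖ /
        (‖(γ:ℂ) + τ * I + 1‖ * ‖(γ:ℂ) + τ * I‖) := by
    rw [hrec, norm_mul, norm_mul]
    rw [eq_div_iff (mul_ne_zero (norm_ne_zero_iff.mpr hs1) (norm_ne_zero_iff.mpr hs0))]
    ring
  have ha2 : ‖(γ:ℂ) + τ * I‖ ^ 2 = γ ^ 2 + τ ^ 2 := by
    rw [Complex.sq_norm, Complex.normSq_apply, hre, him]; ring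
  have hA2 : ‖(γ:ℂ) + τ * I + 1‖ ^ 2 = (γ + 1) ^ 2 + τ ^ 2 := by
    rw [Complex.sq_norm, Complex.normSq_apply, Complex.add_re, Complex.add_im, hre, him,
      Complex.one_re, Complex.one_im]; ring
  have hnng := norm_nonneg ((γ:ℂ) + τ * I)
  have hnng1 := norm_nonneg ((γ:ℂ) + τ * I + 1)
  have hle : ‖(γ:ℂ) + τ * I‖ ≤ ‖(γ:ℂ) + τ * I + 1‖ := by
    nlinarith [sq_nonneg (‖(γ:ℂ) + τ * I‖ - ‖(γ:ℂ) + τ * I + 1‖)]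
  have h1 : ‖Complex.Gamma ((γ:ℂ) + τ * I + 1 + 1)‖ ≤ Real.Gamma (γ + 2) := by
    have hre2 : ((γ:ℂ) + τ * I + 1 + 1).re = γ + 2 := by
      simp only [Complex.add_re, hre, Complex.one_re]; ring
    have := aux_abs_Gamma_le (s := (γ:ℂ) + τ * I + 1 + 1) (by rw [hre2]; linarith)
    rwa [hre2] at this
  have h2 : γ ^ 2 + τ ^ 2 ≤ ‖(γ:ℂ) + τ * I + 1‖ * ‖(γ:ℂ) + τ * I‖ := by
    nlinarith
  have hpos : (0:ℝ) < γ ^ 2 + τ ^ 2 := by positivity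
  rw [habs]
  exact div_le_div₀ (Real.Gamma_pos_of_pos (by linarith)).le h1 hpos h2

-- derivative
lemma aux_deriv (x : ℝ) (hx : x ∈ Ioo (0:ℝ) 1) :
    HasDerivWithinAt (fun y : ℝ => y / (1 - y)) (((1 - x) ^ 2)⁻¹) (Ioo 0 1) x := by
  have h1 : (1 : ℝ) - x ≠ 0 := by have := hx.2; intro h; nlinarith [hx.2]
  have := (hasDerivAt_id x).div ((hasDerivAt_id x).const_sub 1) h1
  convert this.hasDerivWithinAt using 1
  · rfl
  · rfl
  · rfl
  · simp only [id]; field_simp; ring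

lemma aux_inj : Set.InjOn (fun y : ℝ => y / (1 - y)) (Ioo 0 1) := by
  intro a ha b hb hab
  have h1 : (1:ℝ) - a ≠ 0 := by have := ha.2; intro h; nlinarith
  have h2 : (1:ℝ) - b ≠ 0 := by have := hb.2; intro h; nlinarith
  field_simp at hab
  nlinarith [hab]

lemma aux_image : (fun y : ℝ => y / (1 - y)) '' Ioo 0 1 = Ioi 0 := by
  ext s
  constructor
  · rintro ⟨x, hx, rfl⟩
    exact div_pos hx.1 (by linarith [hx.2])
  · intro hs
    refine ⟨s / (1 + s), ⟨div_pos hs (by linarith [mem_Ioi.mp hs]), ?_⟩, ?_⟩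
    · rw [div_lt_one (by linarith [mem_Ioi.mp hs])]; linarith
    · have h1 : (1:ℝ) + s ≠ 0 := by have := mem_Ioi.mp hs; intro h; linarith
      field_simp
      ring

open Complex MeasureTheory Set

lemma aux_pointwise (z u : ℂ) (x : ℝ) (hx : x ∈ Ioo (0:ℝ) 1) :
    |(((1 - x) ^ 2)⁻¹)| • ((((x / (1 - x) : ℝ)) : ℂ) ^ (u - 1) •
        ((1 : ℂ) + ((x / (1 - x) : ℝ) : ℂ)) ^ (-z)) =
      (x : ℂ) ^ (u - 1) * (1 - (x : ℂ)) ^ (z - u - 1) := by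
  obtain ⟨hx0, hx1⟩ := hx
  set b : ℝ := 1 - x with hb_def
  have hb : 0 < b := by simp [hb_def]; linarith
  have hbC : (b : ℂ) ≠ 0 := ofReal_ne_zero.mpr hb.ne'
  have harg : (b : ℂ).arg ≠ Real.pi := by
    rw [Complex.arg_ofReal_of_nonneg hb.le]; exact (Real.pi_ne_zero).symm
  have h1 : (1 : ℂ) + ((x / b : ℝ) : ℂ) = ((b⁻¹ : ℝ) : ℂ) := by
    have : (1 : ℝ) + x / b = b⁻¹ := by field_simp [hb.ne']; linarith
    push_cast [← this]; ring
  have h2 : (((x / b : ℝ)) : ℂ) ^ (u - 1) = (x : ℂ) ^ (u - 1) * ((b : ℂ) ^ (u - 1))⁻¹ := by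
    rw [div_eq_mul_inv, ofReal_mul, mul_cpow_ofReal_nonneg hx0.le (inv_nonneg.mpr hb.le),
      ofReal_inv, inv_cpow _ _ harg]
  have h3 : ((b⁻¹ : ℝ) : ℂ) ^ (-z) = (b : ℂ) ^ z := by
    rw [ofReal_inv, inv_cpow _ _ harg, Complex.cpow_neg, inv_inv]
  have h4 : ((((1 - x : ℝ)) ^ 2)⁻¹ : ℝ) = ((b : ℝ) ^ 2)⁻¹ := by rw [hb_def]
  have hone : (1 : ℂ) - (x : ℂ) = (b : ℂ) := by push_cast [hb_def]; ring
  rw [h1, smul_eq_mul, h2, h3, hone, abs_of_pos (by positivity : (0:ℝ) < (b^2)⁻¹),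
    Complex.real_smul]
  push_cast
  have h5 : (b:ℂ) ^ (z - u - 1) = (b:ℂ) ^ z * ((b:ℂ) ^ (u - 1))⁻¹ * ((b:ℂ) ^ 2)⁻¹ := by
    rw [← Complex.cpow_neg,
      show ((b:ℂ)^2)⁻¹ = (b:ℂ) ^ (-(2:ℂ)) by
        rw [Complex.cpow_neg, show (2:ℂ) = ((2:ℕ):ℂ) by norm_num, Complex.cpow_natCast],
      ← Complex.cpow_add _ _ hbC, ← Complex.cpow_add _ _ hbC]
    ring_nf
  rw [h5]
  ring

open Complex MeasureTheory Set

lemma aux_mellin (z u : ℂ) (hu : 0 < u.re) (huz : u.re < z.re) :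
    mellin (fun t : ℝ => ((1 : ℂ) + (t : ℂ)) ^ (-z)) u =
      Complex.Gamma u * Complex.Gamma (z - u) / Complex.Gamma z := by
  have hz : 0 < z.re := hu.trans huz
  have hzu : 0 < (z - u).re := by simp only [Complex.sub_re]; linarith
  have hΓz : Complex.Gamma z ≠ 0 := by
    refine Complex.Gamma_ne_zero fun m h => ?_
    rw [h] at hz
    simp only [Complex.neg_re, Complex.natCast_re] at hz
    have : (0:ℝ) ≤ (m:ℝ) := Nat.cast_nonneg m
    linarith
  have hbeta : Complex.Gamma u * Complex.Gamma (z - u) =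
      Complex.Gamma z * Complex.betaIntegral u (z - u) := by
    have h := Complex.Gamma_mul_Gamma_eq_betaIntegral hu hzu
    rwa [add_sub_cancel] at h
  rw [hbeta, mul_div_cancel_left₀ _ hΓz, mellin, ← aux_image,
    integral_image_eq_integral_abs_deriv_smul measurableSet_Ioo aux_deriv aux_inj,
    Complex.betaIntegral, intervalIntegral.integral_of_le zero_le_one,
    MeasureTheory.integral_Ioc_eq_integral_Ioo]
  exact setIntegral_congr_fun measurableSet_Ioo fun x hx => aux_pointwise z u x hx

lemma aux_conv (z : ℂ) (γ : ℝ) (hγ : 0 < γ) (hγz : γ < z.re) :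
    MellinConvergent (fun t : ℝ => ((1 : ℂ) + (t : ℂ)) ^ (-z)) γ := by
  rw [MellinConvergent, ← aux_image,
    integrableOn_image_iff_integrableOn_abs_deriv_smul measurableSet_Ioo aux_deriv aux_inj]
  have hb : IntegrableOn (fun x : ℝ => (x:ℂ) ^ ((γ:ℂ) - 1) * (1 - (x:ℂ)) ^ (z - γ - 1))
      (Ioo (0:ℝ) 1) := by
    have h := Complex.betaIntegral_convergent (u := (γ:ℂ)) (v := z - γ)
      (by simpa using hγ) (by simp only [Complex.sub_re, Complex.ofReal_re]; linarith)
    exact ((intervalIntegrable_iff_integrableOn_Ioc_of_le zero_le_one).mp h).mono_set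
      Ioo_subset_Ioc_self
  exact hb.congr_fun (fun x hx => (aux_pointwise z (γ:ℂ) x hx).symm) measurableSet_Ioo

/-- the Mellin–Barnes beta integral
`(1/(2πi)) ∫_{(γ)} Γ(u)Γ(z-u)/Γ(z) t^{-u} du = (1+t)^{-z}`. -/
theorem stmt_4 (z : ℂ) (γ : ℝ) (hγ : 0 < γ) (hγz : γ < z.re) (t : ℝ) (ht : 0 < t) :
    (1 / (2 * Real.pi * I)) *
      (I * ∫ τ : ℝ, Complex.Gamma (γ + τ * I) * Complex.Gamma (z - (γ + τ * I)) / Complex.Gamma z *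
        (t : ℂ) ^ (-(γ + τ * I)))
      = (1 + (t : ℂ)) ^ (-z) := by
  set f : ℝ → ℂ := fun s : ℝ => ((1 : ℂ) + (s : ℂ)) ^ (-z) with hf_def
  have hre : ∀ τ : ℝ, ((γ:ℂ) + τ * I).re = γ := fun τ => by simp
  have hmel : ∀ τ : ℝ, mellin f ((γ:ℂ) + τ * I) =
      Complex.Gamma ((γ:ℂ) + τ * I) * Complex.Gamma (z - ((γ:ℂ) + τ * I)) / Complex.Gamma z :=
    fun τ => aux_mellin z _ (by rw [hre]; exact hγ) (by rw [hre]; exact hγz)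
  -- vertical integrability
  have hΓz : Complex.Gamma z ≠ 0 := by
    refine Complex.Gamma_ne_zero fun m h => ?_
    have h' := congrArg Complex.re h
    simp only [Complex.neg_re, Complex.natCast_re] at h'
    have : (0:ℝ) ≤ (m:ℝ) := Nat.cast_nonneg m
    have hz : 0 < z.re := lt_trans hγ hγz
    linarith [h' ▸ hz]
  have hintC : Integrable (fun τ : ℝ => (γ ^ 2 + τ ^ 2)⁻¹) := by
    have h0 := (integrable_inv_one_add_sq.const_mul ((γ ^ 2)⁻¹)).comp_mul_right'
      (inv_ne_zero hγ.ne')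
    refine h0.congr (Filter.Eventually.of_forall fun x => ?_)
    have : γ ≠ 0 := hγ.ne'
    field_simp
  have hFcont : Continuous fun τ : ℝ =>
      Complex.Gamma ((γ:ℂ) + τ * I) * Complex.Gamma (z - ((γ:ℂ) + τ * I)) / Complex.Gamma z := by
    have hline : Continuous fun τ : ℝ => (γ:ℂ) + τ * I :=
      continuous_const.add (Complex.continuous_ofReal.mul continuous_const)
    refine Continuous.div_const (Continuous.mul ?_ ?_) _
    · refine continuous_iff_continuousAt.mpr fun τ => ?_
      refine (Complex.differentiableAt_Gamma _ fun m => ?_).continuousAt.comp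
        hline.continuousAt
      intro h
      have h' := congrArg Complex.re h
      rw [hre] at h'
      simp only [Complex.neg_re, Complex.natCast_re] at h'
      linarith [Nat.cast_nonneg (α := ℝ) m]
    · refine continuous_iff_continuousAt.mpr fun τ => ?_
      refine (Complex.differentiableAt_Gamma _ fun m => ?_).continuousAt.comp
        ((continuous_const.sub hline).continuousAt)
      intro h
      have h' := congrArg Complex.re h
      simp only [Complex.sub_re, hre, Complex.neg_re, Complex.natCast_re] at h'
      linarith [Nat.cast_nonneg (α := ℝ) m]
  have hC : (0:ℝ) ≤ Real.Gamma (γ + 2) * Real.Gamma (z.re - γ) / ‖Complex.Gamma z‖ :=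
    div_nonneg (mul_nonneg (Real.Gamma_pos_of_pos (by linarith)).le
      (Real.Gamma_pos_of_pos (by linarith)).le) (norm_nonneg _)
  have hFint : Integrable (fun τ : ℝ =>
      Complex.Gamma ((γ:ℂ) + τ * I) * Complex.Gamma (z - ((γ:ℂ) + τ * I)) / Complex.Gamma z) := by
    refine Integrable.mono
      ((hintC.const_mul
        (Real.Gamma (γ + 2) * Real.Gamma (z.re - γ) / ‖Complex.Gamma z‖)))
      hFcont.aestronglyMeasurable (Filter.Eventually.of_forall fun τ => ?_)
    have hb1 := aux_gamma_bound hγ τ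
    have hb2 : ‖Complex.Gamma (z - ((γ:ℂ) + τ * I))‖ ≤ Real.Gamma (z.re - γ) := by
      have hre2 : (z - ((γ:ℂ) + τ * I)).re = z.re - γ := by
        simp only [Complex.sub_re, hre]
      have := aux_abs_Gamma_le (s := z - ((γ:ℂ) + τ * I)) (by rw [hre2]; linarith)
      rwa [hre2] at this
    have hpos : (0:ℝ) < γ ^ 2 + τ ^ 2 := by positivity
    have hΓza : 0 < ‖Complex.Gamma z‖ := norm_pos_iff.mpr hΓz
    rw [norm_div, norm_mul, Real.norm_eq_abs,
      _root_.abs_of_nonneg (mul_nonneg hC (inv_nonneg.mpr hpos.le))]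
    calc ‖Complex.Gamma ((γ:ℂ) + τ * I)‖ *
          ‖Complex.Gamma (z - ((γ:ℂ) + τ * I))‖ / ‖Complex.Gamma z‖
        ≤ (Real.Gamma (γ + 2) / (γ ^ 2 + τ ^ 2)) * Real.Gamma (z.re - γ) /
            ‖Complex.Gamma z‖ := by
          gcongr
      _ = Real.Gamma (γ + 2) * Real.Gamma (z.re - γ) / ‖Complex.Gamma z‖ *
            (γ ^ 2 + τ ^ 2)⁻¹ := by
          ring
  have hvert : Complex.VerticalIntegrable (mellin f) γ := by
    refine hFint.congr (Filter.Eventually.of_forall fun τ => ?_)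
    exact (hmel τ).symm
  have hfc : ContinuousAt f t := by
    have h1 : (1:ℂ) + (t:ℂ) ∈ Complex.slitPlane := by
      rw [Complex.mem_slitPlane_iff]
      left
      simp only [Complex.add_re, Complex.one_re, Complex.ofReal_re]
      linarith
    exact ContinuousAt.comp (g := fun x : ℂ => x ^ (-z)) (f := fun s : ℝ => 1 + (s:ℂ))
      (continuousAt_cpow_const h1)
      ((continuous_const.add Complex.continuous_ofReal).continuousAt)
  have hinv := mellinInv_mellin_eq γ f ht (aux_conv z γ hγ hγz) hvert hfc
  have hIeq : (∫ τ : ℝ, Complex.Gamma ((γ:ℂ) + τ * I) *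
        Complex.Gamma (z - ((γ:ℂ) + τ * I)) / Complex.Gamma z * (t : ℂ) ^ (-((γ:ℂ) + τ * I)))
      = ∫ τ : ℝ, (t : ℂ) ^ (-((γ:ℂ) + τ * I)) • mellin f ((γ:ℂ) + τ * I) := by
    refine integral_congr_ae (Filter.Eventually.of_forall fun τ => ?_)
    simp only [smul_eq_mul, hmel τ]
    ring
  have hπ : (Real.pi : ℂ) ≠ 0 := Complex.ofReal_ne_zero.mpr Real.pi_ne_zero
  calc (1 / (2 * (Real.pi:ℂ) * I)) *
      (I * ∫ τ : ℝ, Complex.Gamma ((γ:ℂ) + τ * I) *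
        Complex.Gamma (z - ((γ:ℂ) + τ * I)) / Complex.Gamma z * (t : ℂ) ^ (-((γ:ℂ) + τ * I)))
      = mellinInv γ (mellin f) t := by
        rw [hIeq, mellinInv, Complex.real_smul, ← mul_assoc]
        congr 1
        push_cast
        field_simp
    _ = (1 + (t:ℂ)) ^ (-z) := hinv
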